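/- Let A_{t_1}, …, A_{t_n} be square real matrices and α, β real with times t_1 < t_2 < ⋯ < t_n. Define W_{t_n} = A_{t_n} + ∑_{r=1}^{n-1} e^{-β(t_n − t_{n-r})} ∑_{m_{n-r+1},…,m_n ∈ {0,1}} α^{∑ m_i} A_{t_{n-r}} A_{t_{n-r+1}}^{m_{n-r+1}} ⋯ A_{t_n}^{m_n}. Then W satisfies the recursion W_{t_n} = A_{t_n} + e^{-β(t_n − t_{n-1})} W_{t_{n-1}} (I + α A_{t_n}) for n > 1, with W_{t_1} = A_{t_1}. -/

import Mathlib

/-! Summing over the choices `m` expands the ordered product `∏ᵢ (1 + α A_{t_i})`, so the inner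
sum of `W_{t_n}` for the step `r` is `A_{t_{n-r}} (1 + α A_{t_{n-r+1}}) ⋯ (1 + α A_{t_n})`. In this
closed form the term `r = 1` of `W_{t_n}` is `e^{-β(t_n - t_{n-1})} A_{t_{n-1}} (1 + α A_{t_n})`,
and the term `r + 1` is the term `r` of `W_{t_{n-1}}` multiplied on the right by
`1 + α A_{t_n}` and by `e^{-β(t_n - t_{n-1})}`, because the exponents of the discounts add. -/

/-- The explicit dynamic win-score matrix: direct wins at time `t n` plus, for
each earlier time `t (n-r)`, exponentially discounted (in-)direct win paths. -/
noncomputable def dynWinMatrix {N : ℕ} (A : ℕ → Matrix (Fin N) (Fin N) ℝ)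
    (t : ℕ → ℝ) (α β : ℝ) (n : ℕ) : Matrix (Fin N) (Fin N) ℝ :=
  A n + ∑ r ∈ Finset.Icc 1 n, Real.exp (-β * (t n - t (n - r))) •
    ∑ m : Fin r → Bool,
      (α ^ (Finset.univ.filter (fun i => m i = true)).card) •
        (A (n - r) *
          (List.ofFn (fun i : Fin r =>
            A (n - r + 1 + (i : ℕ)) ^ (if m i then 1 else 0))).prod)

open Finset

theorem prod_ofFn_one_add_eq_sum {R : Type*} [Semiring R] :
    ∀ {r : ℕ} (g : Fin r → R),
      (List.ofFn fun i => 1 + g i).prod =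
        ∑ m : Fin r → Bool, (List.ofFn fun i => if m i then g i else 1).prod
  | 0, g => by simp
  | r + 1, g => by
    rw [← (Fin.consEquiv fun _ => Bool).sum_comp, Fintype.sum_prod_type, Fintype.sum_bool,
      List.ofFn_succ, List.prod_cons, prod_ofFn_one_add_eq_sum, add_mul, one_mul, mul_sum]
    simp [Fin.consEquiv, List.ofFn_succ, add_comm]

section Algebra

variable {S R : Type*} [CommSemiring S] [Semiring R] [Algebra S R]

theorem prod_ofFn_smul :
    ∀ {r : ℕ} (c : Fin r → S) (x : Fin r → R),
      (List.ofFn fun i => c i • x i).prod = (∏ i, c i) • (List.ofFn x).prod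
  | 0, c, x => by simp
  | r + 1, c, x => by
    rw [List.ofFn_succ, List.prod_cons, prod_ofFn_smul, Fin.prod_univ_succ, List.ofFn_succ,
      List.prod_cons, smul_mul_smul_comm]

theorem prod_ofFn_ite_smul {r : ℕ} (α : S) (f : Fin r → R) (m : Fin r → Bool) :
    (List.ofFn fun i => if m i then α • f i else 1).prod =
      α ^ #{i | m i = true} • (List.ofFn fun i => f i ^ (if m i then 1 else 0)).prod := by
  have h i : (if m i then α • f i else 1) =
      α ^ (if m i then 1 else 0) • f i ^ (if m i then 1 else 0) := by
    cases m i <;> simp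
  rw [card_filter, ← prod_pow_eq_pow_sum, ← prod_ofFn_smul, funext h]

theorem prod_ofFn_one_add_smul {r : ℕ} (α : S) (f : Fin r → R) :
    (List.ofFn fun i => 1 + α • f i).prod =
      ∑ m : Fin r → Bool,
        α ^ #{i | m i = true} • (List.ofFn fun i => f i ^ (if m i then 1 else 0)).prod := by
  simp only [prod_ofFn_one_add_eq_sum, prod_ofFn_ite_smul]

end Algebra

theorem prod_ofFn_window_succ {M : Type*} [Monoid M] (g : ℕ → M) {k r : ℕ} (hr : r ≤ k) :
    (List.ofFn fun i : Fin (r + 1) => g (k + 1 - (r + 1) + 1 + i)).prod =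
      (List.ofFn fun i : Fin r => g (k - r + 1 + i)).prod * g (k + 1) := by
  rw [List.ofFn_succ', List.prod_concat]
  simp only [Fin.val_last, Fin.val_castSucc, Nat.add_sub_add_right]
  congr 2
  omega

theorem dynWinMatrix_eq {N : ℕ} (A : ℕ → Matrix (Fin N) (Fin N) ℝ) (t : ℕ → ℝ) (α β : ℝ)
    (n : ℕ) :
    dynWinMatrix A t α β n = A n + ∑ r ∈ Icc 1 n, Real.exp (-β * (t n - t (n - r))) •
      (A (n - r) * (List.ofFn fun i : Fin r => 1 + α • A (n - r + 1 + i)).prod) := by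
  simp only [dynWinMatrix, prod_ofFn_one_add_smul, mul_sum, mul_smul_comm]

theorem sum_Icc_one_eq_sum_range {M : Type*} [AddCommMonoid M] (f : ℕ → M) (n : ℕ) :
    ∑ r ∈ Icc 1 n, f r = ∑ j ∈ range n, f (j + 1) := by
  rw [← Ico_add_one_right_eq_Icc, sum_Ico_eq_sum_range, Nat.add_sub_cancel]
  simp only [add_comm 1]

theorem dynWinMatrix_recursion_general {N : ℕ} (A : ℕ → Matrix (Fin N) (Fin N) ℝ)
    (t : ℕ → ℝ) (α β : ℝ) :
    dynWinMatrix A t α β 0 = A 0 ∧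
    ∀ n : ℕ, 0 < n →
      dynWinMatrix A t α β n =
        A n + Real.exp (-β * (t n - t (n - 1))) •
          (dynWinMatrix A t α β (n - 1) * (1 + α • A n)) := by
  refine ⟨by simp [dynWinMatrix], fun n hn => ?_⟩
  obtain ⟨k, rfl⟩ := Nat.exists_eq_add_one.mpr hn
  rw [dynWinMatrix_eq, dynWinMatrix_eq, Nat.add_sub_cancel, sum_Icc_one_eq_sum_range,
    sum_Icc_one_eq_sum_range, sum_range_succ', add_mul, sum_mul, smul_add, smul_sum]
  congr 1
  rw [add_comm]
  congr 1
  · simp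
  · refine sum_congr rfl fun j hj => ?_
    rw [prod_ofFn_window_succ (fun l => 1 + α • A l) (mem_range.mp hj), Nat.add_sub_add_right,
      smul_mul_assoc, smul_smul, ← Real.exp_add, mul_assoc]
    congr 2
    ring

/-- The explicitly defined dynamic win-score matrix satisfies the recursion
`W_{t_1} = A_{t_1}` and
`W_{t_n} = A_{t_n} + e^{-β(t_n - t_{n-1})} W_{t_{n-1}} (I + α A_{t_n})`. -/
theorem dynWinMatrix_recursion {N : ℕ} (A : ℕ → Matrix (Fin N) (Fin N) ℝ)
    (t : ℕ → ℝ) (ht : StrictMono t) (α β : ℝ) :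
    dynWinMatrix A t α β 0 = A 0 ∧
    ∀ n : ℕ, 0 < n →
      dynWinMatrix A t α β n =
        A n + Real.exp (-β * (t n - t (n - 1))) •
          (dynWinMatrix A t α β (n - 1) * (1 + α • A n)) :=
  dynWinMatrix_recursion_general A t α β
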